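/- The form P_{3,3,6}(x,y) = x₁²y₁² + x₂²y₂² + x₃²y₃² + x₁²y₂² + x₂²y₃² + x₃²y₁² cannot be written as a sum of 5 or fewer squares of bilinear forms; its SOS rank is exactly 6. -/

import Mathlib

/-!
Write `P = ∑ₜ Lₜ²` with `Lₜ(x, y) = ∑ c_{tij} xᵢ yⱼ` and put `v_{ij} = (c_{tij})ₜ ∈ ℝ^R`.
For a form `∑_{(a,b) ∈ S} x_a² y_b²` the mixed second difference along `(e_i, e_k)` and
`(e_j, e_l)` gives `⟨v_{ij}, v_{kl}⟩ + ⟨v_{il}, v_{kj}⟩ = 2·[i = k ∧ j = l ∧ (i, j) ∈ S]`.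
So `v_{ij} = 0` off `S`, `‖v_{ij}‖ = 1` on `S`, and when `S` contains no rectangle
`{i, k} × {j, l}` the vectors `v_s`, `s ∈ S`, are orthonormal in `ℝ^R`, whence `R ≥ #S`.
The monomials `x_a y_b`, `(a, b) ∈ S`, give a decomposition with exactly `#S` squares, and the
support of `P_{3,3,6}` is rectangle-free.
-/

/-- `c` gives an SOS decomposition of the biquadratic form `P` into `R` squares
of bilinear forms. -/
def IsSOSDecomp (m n R : ℕ) (P : (Fin m → ℝ) → (Fin n → ℝ) → ℝ)
    (c : Fin R → Fin m → Fin n → ℝ) : Prop :=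
  ∀ x y, P x y = ∑ t, (∑ i, ∑ j, c t i j * x i * y j)^2

/-- The SOS rank: the minimal number of squares of bilinear forms summing to `P`. -/
noncomputable def sosRank (m n : ℕ) (P : (Fin m → ℝ) → (Fin n → ℝ) → ℝ) : ℕ :=
  sInf {R | ∃ c : Fin R → Fin m → Fin n → ℝ, IsSOSDecomp m n R P c}

/-- The cyclic six-term simple form `P_{3,3,6}`. -/
def P336 : (Fin 3 → ℝ) → (Fin 3 → ℝ) → ℝ :=
  fun x y => (x 0)^2*(y 0)^2 + (x 1)^2*(y 1)^2 + (x 2)^2*(y 2)^2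
    + (x 0)^2*(y 1)^2 + (x 1)^2*(y 2)^2 + (x 2)^2*(y 0)^2

open Finset Matrix

section Polarize

variable {M N R : Type*} [CommRing R] [AddCommGroup M] [AddCommGroup N]

def polarize (Q : M → N → R) (x x' : M) (y y' : N) : R :=
  Q (x + x') (y + y') - Q (x + x') (y - y') - Q (x - x') (y + y') + Q (x - x') (y - y')

theorem polarize_sum {ι : Type*} (s : Finset ι) (Q : ι → M → N → R) (x x' : M) (y y' : N) :
    polarize (fun x y => ∑ t ∈ s, Q t x y) x x' y y' = ∑ t ∈ s, polarize (Q t) x x' y y' := by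
  simp only [polarize, sum_add_distrib, sum_sub_distrib]

theorem polarize_sq_dotProduct_mulVec {ι κ : Type*} [Fintype ι] [Fintype κ]
    (A : Matrix ι κ R) (x x' : ι → R) (y y' : κ → R) :
    polarize (fun x y => (x ⬝ᵥ A *ᵥ y) ^ 2) x x' y y' =
      8 * ((x ⬝ᵥ A *ᵥ y) * (x' ⬝ᵥ A *ᵥ y') + (x ⬝ᵥ A *ᵥ y') * (x' ⬝ᵥ A *ᵥ y)) := by
  simp only [polarize, mulVec_add, mulVec_sub, add_dotProduct, sub_dotProduct, dotProduct_add,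
    dotProduct_sub]
  ring

end Polarize

def RectangleFree {α β : Type*} (S : Finset (α × β)) : Prop :=
  ∀ i k j l, (i, j) ∈ S → (i, l) ∈ S → (k, j) ∈ S → (k, l) ∈ S → i = k ∨ j = l

variable {m n : ℕ}

def diagForm (S : Finset (Fin m × Fin n)) (x : Fin m → ℝ) (y : Fin n → ℝ) : ℝ :=
  ∑ p ∈ S, x p.1 ^ 2 * y p.2 ^ 2

theorem polarize_diagForm (S : Finset (Fin m × Fin n)) (x x' : Fin m → ℝ) (y y' : Fin n → ℝ) :
    polarize (diagForm S) x x' y y' = 16 * ∑ p ∈ S, x p.1 * x' p.1 * (y p.2 * y' p.2) := by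
  simp only [polarize, diagForm, ← sum_add_distrib, ← sum_sub_distrib, mul_sum, Pi.add_apply,
    Pi.sub_apply]
  exact sum_congr rfl fun p _ => by ring

theorem polarize_diagForm_single (S : Finset (Fin m × Fin n)) (i k : Fin m) (j l : Fin n) :
    polarize (diagForm S) (Pi.single i 1) (Pi.single k 1) (Pi.single j 1) (Pi.single l 1) =
      if i = k ∧ j = l ∧ (i, j) ∈ S then 16 else 0 := by
  have hterm (p : Fin m × Fin n) :
      (Pi.single i 1 : Fin m → ℝ) p.1 * (Pi.single k 1 : Fin m → ℝ) p.1 *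
        ((Pi.single j 1 : Fin n → ℝ) p.2 * (Pi.single l 1 : Fin n → ℝ) p.2) =
      if (i, j) = p then if i = k ∧ j = l then 1 else 0 else 0 := by
    obtain ⟨a, b⟩ := p
    simp only [Pi.single_apply, Prod.ext_iff]
    split_ifs <;> grind
  rw [polarize_diagForm]
  simp only [hterm, sum_ite_eq]
  split_ifs <;> grind

theorem dotProduct_of_mulVec (c : Fin m → Fin n → ℝ) (x : Fin m → ℝ) (y : Fin n → ℝ) :
    x ⬝ᵥ of c *ᵥ y = ∑ i, ∑ j, c i j * x i * y j := by
  simp only [dotProduct, mulVec, of_apply, mul_sum]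
  exact sum_congr rfl fun i _ => sum_congr rfl fun j _ => by ring

def coeffVec {R : ℕ} (c : Fin R → Fin m → Fin n → ℝ) (p : Fin m × Fin n) :
    EuclideanSpace ℝ (Fin R) :=
  WithLp.toLp 2 fun t => c t p.1 p.2

theorem inner_coeffVec {R : ℕ} (c : Fin R → Fin m → Fin n → ℝ) (p q : Fin m × Fin n) :
    inner ℝ (coeffVec c p) (coeffVec c q) = ∑ t, c t p.1 p.2 * c t q.1 q.2 := by
  simp [coeffVec, PiLp.inner_apply, mul_comm]

namespace IsSOSDecomp

variable {S : Finset (Fin m × Fin n)} {R : ℕ} {c : Fin R → Fin m → Fin n → ℝ}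

theorem gram_add_gram_swap (hc : IsSOSDecomp m n R (diagForm S) c) (i k : Fin m) (j l : Fin n) :
    ∑ t, (c t i j * c t k l + c t i l * c t k j) =
      if i = k ∧ j = l ∧ (i, j) ∈ S then 2 else 0 := by
  have h := polarize_diagForm_single S i k j l
  have hQ : diagForm S = fun x y => ∑ t, (x ⬝ᵥ of (c t) *ᵥ y) ^ 2 := by
    ext x y
    simp only [hc x y, dotProduct_of_mulVec]
  rw [hQ, polarize_sum] at h
  simp only [polarize_sq_dotProduct_mulVec, mulVec_single_one, single_one_dotProduct, col_apply,
    of_apply, ← mul_sum] at h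
  split_ifs at h ⊢ <;> linarith

theorem sum_sq_coeff (hc : IsSOSDecomp m n R (diagForm S) c) (i : Fin m) (j : Fin n) :
    ∑ t, c t i j ^ 2 = if (i, j) ∈ S then 1 else 0 := by
  have h := hc.gram_add_gram_swap i i j j
  simp only [true_and, ← two_mul, ← mul_sum, ← sq] at h
  split_ifs at h ⊢ <;> linarith

theorem coeff_eq_zero (hc : IsSOSDecomp m n R (diagForm S) c) {i : Fin m} {j : Fin n}
    (hij : (i, j) ∉ S) (t : Fin R) : c t i j = 0 := by
  have h := hc.sum_sq_coeff i j
  rw [if_neg hij, sum_eq_zero_iff_of_nonneg fun t _ => sq_nonneg _] at h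
  exact pow_eq_zero_iff two_ne_zero |>.mp (h t (mem_univ t))

theorem orthonormal_coeffVec (hS : RectangleFree S) (hc : IsSOSDecomp m n R (diagForm S) c) :
    Orthonormal ℝ fun p : S => coeffVec c p := by
  rw [orthonormal_iff_ite]
  rintro ⟨⟨i, j⟩, hij⟩ ⟨⟨k, l⟩, hkl⟩
  simp only [inner_coeffVec, Subtype.mk.injEq]
  by_cases hp : (i, j) = (k, l)
  · obtain ⟨rfl, rfl⟩ := Prod.ext_iff.mp hp
    simpa [← sq, hij] using hc.sum_sq_coeff i j
  rw [if_neg hp]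
  have hswap := hc.gram_add_gram_swap i k j l
  rw [if_neg fun h => hp (Prod.ext h.1 h.2.1), sum_add_distrib] at hswap
  by_cases hik : i = k
  · subst hik
    simp only [mul_comm (c _ i l)] at hswap
    linarith
  by_cases hjl : j = l
  · subst hjl
    linarith
  have hrect : (i, l) ∉ S ∨ (k, j) ∉ S := by
    by_contra! h
    exact (hS i k j l hij h.1 h.2 hkl).elim hik hjl
  have hzero : ∑ t, c t i l * c t k j = 0 := by
    refine sum_eq_zero fun t _ => ?_
    rcases hrect with h | h <;> simp [hc.coeff_eq_zero h t]
  linarith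

theorem card_le (hS : RectangleFree S) (hc : IsSOSDecomp m n R (diagForm S) c) : #S ≤ R := by
  simpa using (hc.orthonormal_coeffVec hS).linearIndependent.fintype_card_le_finrank

end IsSOSDecomp

noncomputable def monomialCoeffs (S : Finset (Fin m × Fin n)) : Fin #S → Fin m → Fin n → ℝ :=
  fun t i j => if (i, j) = (S.equivFin.symm t : Fin m × Fin n) then 1 else 0

theorem isSOSDecomp_monomialCoeffs (S : Finset (Fin m × Fin n)) :
    IsSOSDecomp m n #S (diagForm S) (monomialCoeffs S) := by
  intro x y
  rw [diagForm, ← sum_coe_sort S, ← S.equivFin.symm.sum_comp]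
  refine sum_congr rfl fun t _ => ?_
  simp [monomialCoeffs, Prod.ext_iff, ite_and, mul_pow]

theorem sosRank_diagForm {S : Finset (Fin m × Fin n)} (hS : RectangleFree S) :
    sosRank m n (diagForm S) = #S :=
  le_antisymm (Nat.sInf_le ⟨_, isSOSDecomp_monomialCoeffs S⟩)
    (le_csInf ⟨_, _, isSOSDecomp_monomialCoeffs S⟩ fun _ ⟨_, hc⟩ => hc.card_le hS)

def supportP336 : Finset (Fin 3 × Fin 3) := {(0, 0), (1, 1), (2, 2), (0, 1), (1, 2), (2, 0)}

theorem P336_eq_diagForm : P336 = diagForm supportP336 := by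
  ext x y
  simp only [P336, diagForm, supportP336, mem_insert, mem_singleton, Prod.mk.injEq, Fin.reduceEq,
    and_false, and_true, or_self, not_false_eq_true, sum_insert, sum_singleton]
  ring

theorem rectangleFree_supportP336 : RectangleFree supportP336 := by
  unfold RectangleFree supportP336
  decide

theorem card_supportP336 : #supportP336 = 6 := rfl

/-- `P_{3,3,6}` cannot be written as a sum of 5 or fewer squares of
bilinear forms; its SOS rank is exactly 6. -/
theorem P336_sosRank_eq_six :
    (∀ (R : ℕ) (c : Fin R → Fin 3 → Fin 3 → ℝ),
        IsSOSDecomp 3 3 R P336 c → 6 ≤ R) ∧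
    sosRank 3 3 P336 = 6 := by
  rw [P336_eq_diagForm, ← card_supportP336]
  exact ⟨fun _ _ hc => hc.card_le rectangleFree_supportP336,
    sosRank_diagForm rectangleFree_supportP336⟩
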